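/- Let X be a k-regular mm-space for some natural number k ≥ 1. Then for any 0 < κ < 1, any 1 ≤ p < +∞ and any natural number n ≥ 1, ObsDiam(X_p^n; -κ) ≤ n^{1/(2p) - 1/2} · ObsDiam(X_1^n; -κ) + 4 n^{1/(2p)}. -/

import Mathlib

open MeasureTheory Filter Topology Bornology
open scoped ENNReal

noncomputable section

/-- The partial diameter `diam(ν; α)` of a Borel measure `ν` on `ℝ`. -/
def partialDiam (ν : Measure ℝ) (α : ℝ) : ℝ :=
  sInf {r : ℝ | ∃ A : Set ℝ, MeasurableSet A ∧ IsBounded A ∧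
    ENNReal.ofReal α ≤ ν A ∧ r = Metric.diam A}

/-- The observable diameter `ObsDiam(X; -κ)` with respect to an explicit distance `d`. -/
def obsDiam {X : Type*} [MeasurableSpace X] (d : X → X → ℝ)
    (μ : Measure X) (κ : ℝ) : ℝ :=
  sSup {r : ℝ | ∃ f : X → ℝ, Measurable f ∧ (∀ x y, |f x - f y| ≤ d x y) ∧
    r = partialDiam (μ.map f) (1 - κ)}

/-- The `l_p`-distance on the `n`-fold product, for `1 ≤ p < ∞`. -/
def lpDist {X : Type*} (d : X → X → ℝ) (p : ℝ) {n : ℕ} (x y : Fin n → X) : ℝ :=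
  (∑ i, d (x i) (y i) ^ p) ^ (1 / p)

/-!
On the `k`-regular space every coordinate distance is `0` or `1`, so `d_p = d_1 ^ (1/p)` on
`X^n`. With `s = √n` and `c = s ^ (1 - 1/p)`, weighted AM–GM gives `c d_p ≤ d_1 + s`. For a
`d_p`-Lipschitz `f`, the inf-convolution `g = ⨅ y, c f(y) + d_1(·, y)` is `d_1`-Lipschitz and
`g ≤ c f ≤ g + s`, so `c diam(f_*μ; 1-κ) ≤ diam(g_*μ; 1-κ) + s ≤ ObsDiam(X_1^n; -κ) + s`.
Finally `c⁻¹ = n^(1/(2p) - 1/2)` and `c⁻¹ s = n^(1/(2p))`.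
-/

open Set

lemma partialDiam_nonneg (ν : Measure ℝ) (α : ℝ) : 0 ≤ partialDiam ν α :=
  Real.sInf_nonneg fun _ ⟨_, _, _, _, hr⟩ => hr ▸ Metric.diam_nonneg

lemma partialDiam_le_diam {ν : Measure ℝ} {α : ℝ} {A : Set ℝ} (hA : MeasurableSet A)
    (hAb : IsBounded A) (hνA : ENNReal.ofReal α ≤ ν A) : partialDiam ν α ≤ Metric.diam A :=
  csInf_le ⟨0, fun _ ⟨_, _, _, _, hr⟩ => hr ▸ Metric.diam_nonneg⟩ ⟨A, hA, hAb, hνA, rfl⟩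

section PartialDiamMap

variable {Ω : Type*} [MeasurableSpace Ω] {ν : Measure Ω} {α : ℝ} {f g : Ω → ℝ}

lemma ofReal_le_map_of_range_subset (hf : Measurable f) {A : Set ℝ} (hA : MeasurableSet A)
    (hfA : range f ⊆ A) (hα : ENNReal.ofReal α ≤ ν univ) : ENNReal.ofReal α ≤ ν.map f A := by
  rwa [Measure.map_apply hf hA, preimage_eq_univ_iff.2 hfA]

lemma partialDiam_map_le_diam_of_range_subset (hf : Measurable f) {A : Set ℝ}
    (hA : MeasurableSet A) (hAb : IsBounded A) (hfA : range f ⊆ A)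
    (hα : ENNReal.ofReal α ≤ ν univ) : partialDiam (ν.map f) α ≤ Metric.diam A :=
  partialDiam_le_diam hA hAb (ofReal_le_map_of_range_subset hf hA hfA hα)

/-- A set `A` of large `g_*ν`-measure pulls back into `Icc (sInf A / c) ((sSup A + s) / c)`,
a set of large `f_*ν`-measure; by `Real.diam_eq` this also covers `A = ∅`. -/
lemma mul_partialDiam_map_le_of_le_of_le (hf : Measurable f) (hg : Measurable g)
    (hgb : IsBounded (range g)) (hα : ENNReal.ofReal α ≤ ν univ) {c s : ℝ} (hc : 0 < c)
    (hs : 0 ≤ s) (hgf : ∀ x, g x ≤ c * f x) (hfg : ∀ x, c * f x ≤ g x + s) :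
    c * partialDiam (ν.map f) α ≤ partialDiam (ν.map g) α + s := by
  rw [← sub_le_iff_le_add]
  obtain ⟨R, hR⟩ := hgb.subset_closedBall 0
  refine le_csInf ⟨_, _, measurableSet_closedBall, Metric.isBounded_closedBall,
    ofReal_le_map_of_range_subset hg measurableSet_closedBall hR hα, rfl⟩ ?_
  rintro _ ⟨A, hA, hAb, hνA, rfl⟩
  have hA_diam := Real.diam_eq hAb
  have hpre : g ⁻¹' A ⊆ f ⁻¹' Icc (sInf A / c) ((sSup A + s) / c) := fun x hx => by
    rw [mem_preimage, mem_Icc, div_le_iff₀' hc, le_div_iff₀' hc]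
    exact ⟨(csInf_le hAb.bddBelow hx).trans (hgf x),
      (hfg x).trans (by linarith [le_csSup hAb.bddAbove hx])⟩
  have hle := partialDiam_le_diam (ν := ν.map f) (α := α) measurableSet_Icc
    (Metric.isBounded_Icc _ _) (by
      rw [Measure.map_apply hf measurableSet_Icc]
      rw [Measure.map_apply hg hA] at hνA
      exact hνA.trans (measure_mono hpre))
  rw [Real.diam_Icc (by gcongr; linarith [Metric.diam_nonneg (s := A)])] at hle
  have : c * partialDiam (ν.map f) α ≤ Metric.diam A + s :=
    calc c * partialDiam (ν.map f) α ≤ c * ((sSup A + s) / c - sInf A / c) := by gcongr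
      _ = Metric.diam A + s := by rw [hA_diam]; field_simp; ring
  linarith

end PartialDiamMap

section InfConv

variable {Ω : Type*} {F : Ω → ℝ} {d : Ω → Ω → ℝ}

def infConv (F : Ω → ℝ) (d : Ω → Ω → ℝ) (x : Ω) : ℝ :=
  ⨅ y, F y + d x y

lemma infConv_le_add [Finite Ω] (x y : Ω) : infConv F d x ≤ F y + d x y :=
  ciInf_le (finite_range _).bddBelow y

lemma infConv_le [Finite Ω] (hself : ∀ x, d x x = 0) (x : Ω) : infConv F d x ≤ F x := by
  simpa [hself] using infConv_le_add (F := F) (d := d) x x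

lemma sub_le_infConv [Nonempty Ω] {s : ℝ} (h : ∀ x y, F x - F y ≤ d x y + s) (x : Ω) :
    F x - s ≤ infConv F d x :=
  le_ciInf fun y => by linarith [h x y]

lemma infConv_le_infConv_add [Finite Ω] [Nonempty Ω]
    (htri : ∀ x y z, d x z ≤ d x y + d y z) (x y : Ω) :
    infConv F d x ≤ infConv F d y + d x y := by
  rw [← sub_le_iff_le_add]
  exact le_ciInf fun z => by linarith [infConv_le_add (F := F) (d := d) x z, htri x y z]

lemma abs_infConv_sub_infConv_le [Finite Ω] [Nonempty Ω] (hsymm : ∀ x y, d x y = d y x)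
    (htri : ∀ x y z, d x z ≤ d x y + d y z) (x y : Ω) :
    |infConv F d x - infConv F d y| ≤ d x y := by
  rw [abs_sub_le_iff]
  constructor <;> linarith [infConv_le_infConv_add (F := F) htri x y,
    infConv_le_infConv_add (F := F) htri y x, hsymm x y]

end InfConv

section ObsDiam

variable {Ω : Type*} [MeasurableSpace Ω]

lemma obsDiam_nonneg (d : Ω → Ω → ℝ) (μ : Measure Ω) (κ : ℝ) : 0 ≤ obsDiam d μ κ :=
  Real.sSup_nonneg fun _ ⟨_, _, _, hr⟩ => hr ▸ partialDiam_nonneg _ _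

variable {μ : Measure Ω} {κ : ℝ} {d d' : Ω → Ω → ℝ}

lemma ofReal_one_sub_le_measure_univ [IsProbabilityMeasure μ] (hκ : 0 ≤ κ) :
    ENNReal.ofReal (1 - κ) ≤ μ univ := by
  rw [measure_univ]
  exact ENNReal.ofReal_le_one.2 (by linarith)

lemma partialDiam_map_le_obsDiam [Nonempty Ω] [IsProbabilityMeasure μ] (hκ : 0 ≤ κ) {D : ℝ}
    (hD : ∀ x y, d x y ≤ D) {f : Ω → ℝ} (hf : Measurable f)
    (hfd : ∀ x y, |f x - f y| ≤ d x y) : partialDiam (μ.map f) (1 - κ) ≤ obsDiam d μ κ := by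
  refine le_csSup ⟨2 * D, ?_⟩ ⟨f, hf, hfd, rfl⟩
  rintro _ ⟨h, hh, hhd, rfl⟩
  obtain ⟨x₀⟩ := ‹Nonempty Ω›
  have hD0 : 0 ≤ D := (abs_nonneg _).trans ((hhd x₀ x₀).trans (hD x₀ x₀))
  have hrange : range h ⊆ Metric.closedBall (h x₀) D := by
    rintro _ ⟨x, rfl⟩
    exact (hhd x x₀).trans (hD x x₀)
  exact (partialDiam_map_le_diam_of_range_subset hh measurableSet_closedBall
    Metric.isBounded_closedBall hrange (ofReal_one_sub_le_measure_univ hκ)).trans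
    (Metric.diam_closedBall hD0)

/-- Scaled by `c`, a `d`-Lipschitz observable lies within `s` above its inf-convolution with
`d'`, which is `d'`-Lipschitz. -/
theorem mul_obsDiam_le_obsDiam_add [Finite Ω] [Nonempty Ω] [MeasurableSingletonClass Ω]
    (μ : Measure Ω) [IsProbabilityMeasure μ] (hκ : 0 ≤ κ) {c s : ℝ} (hc : 0 < c) (hs : 0 ≤ s)
    (hself : ∀ x, d' x x = 0) (hsymm : ∀ x y, d' x y = d' y x)
    (htri : ∀ x y z, d' x z ≤ d' x y + d' y z) (hdd' : ∀ x y, c * d x y ≤ d' x y + s) :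
    c * obsDiam d μ κ ≤ obsDiam d' μ κ + s := by
  obtain ⟨D, hD⟩ := (finite_range (Function.uncurry d')).bddAbove
  rw [← le_div_iff₀' hc]
  refine Real.sSup_le ?_ (div_nonneg (by linarith [obsDiam_nonneg d' μ κ]) hc.le)
  rintro _ ⟨f, hf, hfd, rfl⟩
  set g := infConv (fun x => c * f x) d'
  have hcf : ∀ x y, c * f x - c * f y ≤ d' x y + s := fun x y =>
    calc c * f x - c * f y ≤ c * |f x - f y| := by rw [← mul_sub]; gcongr; exact le_abs_self _
      _ ≤ c * d x y := by gcongr; exact hfd x y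
      _ ≤ d' x y + s := hdd' x y
  have hfg : ∀ x, c * f x ≤ g x + s := fun x => by
    linarith [sub_le_infConv (F := fun x => c * f x) (d := d') hcf x]
  have hg_le : partialDiam (μ.map g) (1 - κ) ≤ obsDiam d' μ κ :=
    partialDiam_map_le_obsDiam hκ (fun x y => hD ⟨(x, y), rfl⟩) (measurable_of_countable g)
      (abs_infConv_sub_infConv_le hsymm htri)
  rw [le_div_iff₀' hc]
  calc c * partialDiam (μ.map f) (1 - κ) ≤ partialDiam (μ.map g) (1 - κ) + s :=
        mul_partialDiam_map_le_of_le_of_le hf (measurable_of_countable g)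
          (finite_range g).isBounded (ofReal_one_sub_le_measure_univ hκ) hc hs
          (infConv_le hself) hfg
    _ ≤ obsDiam d' μ κ + s := by linarith

end ObsDiam

lemma rpow_mul_rpow_le_add {t m q : ℝ} (ht : 0 ≤ t) (hm : 0 ≤ m) (hq0 : 0 ≤ q) (hq1 : q ≤ 1) :
    t ^ (1 - q) * m ^ q ≤ t + m :=
  calc t ^ (1 - q) * m ^ q ≤ (1 - q) * t + q * m :=
        Real.geom_mean_le_arith_mean2_weighted (by linarith) hq0 ht hm (by ring)
    _ ≤ t + m := by nlinarith

lemma lpDist_dist_eq_rpow {X : Type*} [PseudoMetricSpace X]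
    (hdist : ∀ x y : X, x ≠ y → dist x y = 1) {p : ℝ} (hp : p ≠ 0) {n : ℕ} (x y : Fin n → X) :
    lpDist dist p x y = (∑ i, dist (x i) (y i)) ^ (1 / p) := by
  unfold lpDist
  congr 1
  refine Finset.sum_congr rfl fun i _ => ?_
  rcases eq_or_ne (x i) (y i) with h | h
  · simp [h, Real.zero_rpow hp]
  · rw [hdist _ _ h, Real.one_rpow]

lemma isProbabilityMeasure_inv_card_smul_sum_dirac (X : Type*) [Fintype X] [Nonempty X]
    [MeasurableSpace X] :
    IsProbabilityMeasure ((Fintype.card X : ℝ≥0∞)⁻¹ • ∑ x : X, Measure.dirac x) :=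
  ⟨by simp [ENNReal.inv_mul_cancel]⟩

theorem obsDiam_lp_le_of_k_regular_general
    {X : Type*} [MetricSpace X] [Fintype X] [MeasurableSpace X] [BorelSpace X]
    (k : ℕ) (hk : 1 ≤ k) (hcard : Fintype.card X = k)
    (hdist : ∀ x y : X, x ≠ y → dist x y = 1)
    (μ : Measure X) (hμ : μ = (k : ℝ≥0∞)⁻¹ • ∑ x : X, Measure.dirac x)
    (κ : ℝ) (hκ0 : 0 < κ)
    (p : ℝ) (hp : 1 ≤ p) (n : ℕ) (hn : 1 ≤ n) :
    obsDiam (lpDist dist p) (Measure.pi fun _ : Fin n => μ) κ ≤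
      (n : ℝ) ^ (1 / (2 * p) - 1 / 2) *
        obsDiam (fun x y : Fin n → X => ∑ i, dist (x i) (y i))
          (Measure.pi fun _ : Fin n => μ) κ +
      4 * (n : ℝ) ^ (1 / (2 * p)) := by
  subst hcard
  have : Nonempty X := Fintype.card_pos_iff.mp hk
  have : IsProbabilityMeasure μ := hμ ▸ isProbabilityMeasure_inv_card_smul_sum_dirac X
  have hn0 : (0 : ℝ) < n := by exact_mod_cast hn
  set s := (n : ℝ) ^ (1 / 2 : ℝ)
  set c := s ^ (1 - 1 / p)
  have hc_inv : c⁻¹ = (n : ℝ) ^ (1 / (2 * p) - 1 / 2) := by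
    rw [show c = (n : ℝ) ^ ((1 / 2 : ℝ) * (1 - 1 / p)) from (Real.rpow_mul hn0.le _ _).symm,
      ← Real.rpow_neg hn0.le]
    ring_nf
  have hc_inv_s : c⁻¹ * s = (n : ℝ) ^ (1 / (2 * p)) := by
    rw [hc_inv, ← Real.rpow_add hn0]
    ring_nf
  have hlp : ∀ x y : Fin n → X, c * lpDist dist p x y ≤ ∑ i, dist (x i) (y i) + s :=
    fun x y => by
      rw [lpDist_dist_eq_rpow hdist (by positivity), add_comm]
      exact rpow_mul_rpow_le_add (by positivity) (by positivity) (by positivity)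
        ((div_le_one (by positivity)).2 hp)
  have key := mul_obsDiam_le_obsDiam_add (Measure.pi fun _ : Fin n => μ) hκ0.le
    (by positivity) (by positivity) (fun x => by simp) (fun x y => by simp [dist_comm])
    (fun x y z => by
      rw [← Finset.sum_add_distrib]
      exact Finset.sum_le_sum fun i _ => dist_triangle _ _ _) hlp
  rw [← le_inv_mul_iff₀ (by positivity), mul_add, hc_inv_s, hc_inv] at key
  linarith [Real.rpow_nonneg hn0.le (1 / (2 * p))]

/-- **Lemma 3.2.** If `X` is a `k`-regular mm-space (a `k`-point space, all nonzero
distances `1`, with uniform measure), then for `0 < κ < 1`, `1 ≤ p < ∞` and `n ≥ 1`,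
`ObsDiam(X_p^n;-κ) ≤ n^(1/(2p)-1/2) ObsDiam(X_1^n;-κ) + 4 n^(1/(2p))`. -/
theorem obsDiam_lp_le_of_k_regular
    {X : Type*} [MetricSpace X] [Fintype X] [MeasurableSpace X] [BorelSpace X]
    (k : ℕ) (hk : 1 ≤ k) (hcard : Fintype.card X = k)
    (hdist : ∀ x y : X, x ≠ y → dist x y = 1)
    (μ : Measure X) (hμ : μ = (k : ℝ≥0∞)⁻¹ • ∑ x : X, Measure.dirac x)
    (κ : ℝ) (hκ0 : 0 < κ) (hκ1 : κ < 1)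
    (p : ℝ) (hp : 1 ≤ p) (n : ℕ) (hn : 1 ≤ n) :
    obsDiam (lpDist dist p) (Measure.pi fun _ : Fin n => μ) κ ≤
      (n : ℝ) ^ (1 / (2 * p) - 1 / 2) *
        obsDiam (fun x y : Fin n → X => ∑ i, dist (x i) (y i))
          (Measure.pi fun _ : Fin n => μ) κ +
      4 * (n : ℝ) ^ (1 / (2 * p)) :=
  obsDiam_lp_le_of_k_regular_general k hk hcard hdist μ hμ κ hκ0 p hp n hn
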